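/- If $U \subset X$ is open and $E \subset X$ has $\mu(E) = 0$, then $C_{p,q}^s(U) = C_{p,q}^s(U \setminus E)$. -/

import Mathlib

open MeasureTheory ENNReal

variable {X : Type*} [MetricSpace X] [MeasurableSpace X] [OpensMeasurableSpace X]

/-- `(g k)` is a fractional `s`-gradient of `u`. -/
def IsFracGrad (μ : Measure X) (s : ℝ) (u : X → ℝ) (g : ℤ → X → ℝ≥0∞) : Prop :=
  (∀ k, Measurable (g k)) ∧
  ∃ E : Set X, μ E = 0 ∧ ∀ k : ℤ, ∀ x ∉ E, ∀ y ∉ E,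
    (2 : ℝ) ^ (-k - 1) ≤ dist x y → dist x y < (2 : ℝ) ^ (-k) →
      ENNReal.ofReal |u x - u y| ≤ ENNReal.ofReal (dist x y ^ s) * (g k x + g k y)

/-- The `ℓ^q`-norm of a sequence of extended nonnegative reals. -/
noncomputable def ellq (q : ℝ≥0∞) (a : ℤ → ℝ≥0∞) : ℝ≥0∞ :=
  if q = ∞ then ⨆ k, a k else (∑' k, a k ^ q.toReal) ^ (1 / q.toReal)

/-- The `L^p`-norm of an `ℝ≥0∞`-valued function. -/
noncomputable def lpNormE (μ : Measure X) (p : ℝ≥0∞) (f : X → ℝ≥0∞) : ℝ≥0∞ :=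
  if p = ∞ then essSup f μ else (∫⁻ x, f x ^ p.toReal ∂μ) ^ (1 / p.toReal)

/-- The homogeneous Hajłasz–Besov seminorm. -/
noncomputable def besovSemi (μ : Measure X) (s : ℝ) (p q : ℝ≥0∞) (u : X → ℝ) : ℝ≥0∞ :=
  ⨅ (g : ℤ → X → ℝ≥0∞) (_ : IsFracGrad μ s u g), ellq q fun k => lpNormE μ p (g k)

/-- The Hajłasz–Besov (quasi)norm `‖u‖_{L^p} + ‖u‖_{Ṅ^s_{p,q}}`. -/
noncomputable def besovNorm (μ : Measure X) (s : ℝ) (p q : ℝ≥0∞) (u : X → ℝ) : ℝ≥0∞ :=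
  eLpNorm u p μ + besovSemi μ s p q u

/-- `u` belongs to the Hajłasz–Besov space `N^s_{p,q}(X)`. -/
def MemBesov (μ : Measure X) (s : ℝ) (p q : ℝ≥0∞) (u : X → ℝ) : Prop :=
  MemLp u p μ ∧ besovNorm μ s p q u < ⊤

/-- `u` is admissible for the Besov capacity of `E`:
`u ∈ N^s_{p,q}(X)` and `u ≥ 1` on a neighbourhood of `E`. -/
def BesovAdmissible (μ : Measure X) (s : ℝ) (p q : ℝ≥0∞) (E : Set X) (u : X → ℝ) : Prop :=
  MemBesov μ s p q u ∧ ∃ U : Set X, IsOpen U ∧ E ⊆ U ∧ ∀ x ∈ U, 1 ≤ u x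

/-- The Besov capacity `C^s_{p,q}(E)`. -/
noncomputable def besovCapacity (μ : Measure X) (s : ℝ) (p q : ℝ≥0∞) (E : Set X) : ℝ≥0∞ :=
  ⨅ (u : X → ℝ) (_ : BesovAdmissible μ s p q E u), besovNorm μ s p q u ^ p.toReal

/-!
Changing a function on a null set changes neither its fractional gradients nor its `L^p`-norm,
so the Besov norm is insensitive to it. If `u` is admissible for `U \ E`, with `u ≥ 1` on an open
`V ⊇ U \ E`, then `U \ V ⊆ E` is null, and setting `u = 1` on `U \ V` yields a function admissible
for `U` (it is `≥ 1` on the open set `U ∪ V`) with the same norm. The reverse inequality is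
monotonicity of the capacity.
-/

section

omit [OpensMeasurableSpace X]

variable {μ : Measure X} {s : ℝ} {p q : ℝ≥0∞} {u v : X → ℝ}

theorem IsFracGrad.congr_ae {g : ℤ → X → ℝ≥0∞} (hg : IsFracGrad μ s u g) (huv : u =ᵐ[μ] v) :
    IsFracGrad μ s v g := by
  obtain ⟨hmeas, N, hN, hbound⟩ := hg
  refine ⟨hmeas, N ∪ {x | u x ≠ v x}, measure_union_null hN huv, ?_⟩
  intro k x hx y hy hlow hup
  simp only [Set.mem_union, Set.mem_ofPred_eq, not_or, not_not] at hx hy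
  rw [← hx.2, ← hy.2]
  exact hbound k x hx.1 y hy.1 hlow hup

theorem besovSemi_congr_ae (huv : u =ᵐ[μ] v) : besovSemi μ s p q u = besovSemi μ s p q v :=
  le_antisymm
    (le_iInf₂ fun g hg => iInf₂_le g (hg.congr_ae huv.symm))
    (le_iInf₂ fun g hg => iInf₂_le g (hg.congr_ae huv))

theorem besovNorm_congr_ae (huv : u =ᵐ[μ] v) : besovNorm μ s p q u = besovNorm μ s p q v := by
  rw [besovNorm, besovNorm, eLpNorm_congr_ae huv, besovSemi_congr_ae huv]

theorem MemBesov.congr_ae (hu : MemBesov μ s p q u) (huv : u =ᵐ[μ] v) : MemBesov μ s p q v :=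
  ⟨hu.1.ae_eq huv, besovNorm_congr_ae huv ▸ hu.2⟩

theorem BesovAdmissible.mono {A B : Set X} (hu : BesovAdmissible μ s p q B u) (hAB : A ⊆ B) :
    BesovAdmissible μ s p q A u :=
  let ⟨hmem, V, hV, hBV, hge⟩ := hu
  ⟨hmem, V, hV, hAB.trans hBV, hge⟩

theorem besovCapacity_mono {A B : Set X} (hAB : A ⊆ B) :
    besovCapacity μ s p q A ≤ besovCapacity μ s p q B :=
  le_iInf₂ fun u hu => iInf₂_le u (hu.mono hAB)

theorem BesovAdmissible.exists_ae_eq_of_diff_null {U E : Set X} (hU : IsOpen U) (hE : μ E = 0)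
    (hu : BesovAdmissible μ s p q (U \ E) u) :
    ∃ v, v =ᵐ[μ] u ∧ BesovAdmissible μ s p q U v := by
  classical
  obtain ⟨hmem, V, hV, hUV, hge⟩ := hu
  have hnull : μ (U \ V) = 0 :=
    measure_mono_null (fun x hx => by_contra fun hxE => hx.2 (hUV ⟨hx.1, hxE⟩)) hE
  have hae : (U \ V).piecewise 1 u =ᵐ[μ] u := by
    filter_upwards [compl_mem_ae_iff.mpr hnull] with x hx
    exact Set.piecewise_eq_of_notMem _ _ _ hx
  refine ⟨_, hae, hmem.congr_ae hae.symm, U ∪ V, hU.union hV, Set.subset_union_left, ?_⟩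
  intro x hx
  by_cases hxUV : x ∈ U \ V
  · simp [hxUV]
  · rw [Set.piecewise_eq_of_notMem _ _ _ hxUV]
    exact hge x (by_contra fun hxV => hxUV ⟨hx.resolve_right hxV, hxV⟩)

theorem besovCapacity_le_diff_null {U E : Set X} (hU : IsOpen U) (hE : μ E = 0) :
    besovCapacity μ s p q U ≤ besovCapacity μ s p q (U \ E) := by
  refine le_iInf₂ fun u hu => ?_
  obtain ⟨v, hvu, hv⟩ := hu.exists_ae_eq_of_diff_null hU hE
  calc besovCapacity μ s p q U ≤ besovNorm μ s p q v ^ p.toReal := iInf₂_le v hv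
    _ = besovNorm μ s p q u ^ p.toReal := by rw [besovNorm_congr_ae hvu]

end

theorem besovCapacity_diff_null_general (μ : Measure X)
    (s : ℝ) (p q : ℝ≥0∞)
    (U : Set X) (hU : IsOpen U) (E : Set X) (hE : μ E = 0) :
    besovCapacity μ s p q U = besovCapacity μ s p q (U \ E) :=
  le_antisymm (besovCapacity_le_diff_null hU hE) (besovCapacity_mono Set.sdiff_subset)

theorem besovCapacity_diff_null (μ : Measure X) [IsUnifLocDoublingMeasure μ]
    (s : ℝ) (hs : 0 < s) (p q : ℝ≥0∞) (hp : 0 < p) (hq : 0 < q)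
    (U : Set X) (hU : IsOpen U) (E : Set X) (hE : μ E = 0) :
    besovCapacity μ s p q U = besovCapacity μ s p q (U \ E) :=
  besovCapacity_diff_null_general μ s p q U hU E hE
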